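/- Let R be an m × n rectangle in ℤ² and A a p-random subset. The probability that R has no vertical double gap (i.e. for every pair of consecutive columns, at least one of the 2n sites is in A) is at most e^{−(m−1)·g(n·q)}, where q = −log(1−p) and g(z) = −log(β(1−e^{−z})), β(u) = (u+√(u(4−3u)))/2. -/

import Mathlib

/-!
Columns are independent, and a column of `n` sites is empty with probability
`a = (1 - p) ^ n = e^{-nq}`; put `u = 1 - a`. Conditioning on all but the last column, the
probability `P m` of no vertical double gap in `m` columns satisfies
`P (m + 2) = u * P (m + 1) + a * u * P m` (the last column is occupied, or it is empty and the
one before it is occupied), with `P 0 = P 1 = 1`. Now `β = betaFn u` is the positive root of the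
characteristic equation `β ^ 2 = u * β + a * u`, and `β ≤ 1`, so induction gives
`β * P m ≤ β ^ m`, that is `P m ≤ β ^ (m - 1) = e^{-(m-1) g(nq)}`.
-/
noncomputable def betaFn (u : ℝ) : ℝ := (u + Real.sqrt (u * (4 - 3 * u))) / 2

noncomputable def gFn (z : ℝ) : ℝ := - Real.log (betaFn (1 - Real.exp (-z)))

open scoped Classical in
/-- The probability of the event `E` under the `p`-random (product Bernoulli)
measure on subsets of the finite set `V`. -/
noncomputable def probEvent {ι : Type*} [DecidableEq ι] (V : Finset ι) (p : ℝ)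
    (E : Finset ι → Prop) : ℝ :=
  ∑ A ∈ V.powerset, if E A then p ^ A.card * (1 - p) ^ (V.card - A.card) else 0

/-- The rectangle `[1,m] × [1,n]` as a finite set of sites. -/
noncomputable def rectFin (m n : ℕ) : Finset (ℤ × ℤ) := Finset.Icc 1 (m : ℤ) ×ˢ Finset.Icc 1 (n : ℤ)

/-- `A` has no vertical double gap in the `m × n` rectangle: for every pair of
consecutive columns `j, j+1` (with `1 ≤ j ≤ m−1`), some site of those two
columns lies in `A`. -/
def NoVerticalDoubleGap (m n : ℕ) (A : Finset (ℤ × ℤ)) : Prop :=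
  ∀ j : ℤ, 1 ≤ j → j ≤ (m : ℤ) - 1 →
    ∃ v ∈ A, (v.1 = j ∨ v.1 = j + 1) ∧ 1 ≤ v.2 ∧ v.2 ≤ (n : ℤ)

open Finset

open scoped Classical

section ProbEvent

variable {ι : Type*} [DecidableEq ι] {V : Finset ι} {p : ℝ} {E F : Finset ι → Prop}

theorem probEvent_congr (h : ∀ A ⊆ V, (E A ↔ F A)) : probEvent V p E = probEvent V p F :=
  sum_congr rfl fun A hA => by simp only [h A (mem_powerset.1 hA)]

theorem probEvent_of_forall (h : ∀ A ⊆ V, E A) : probEvent V p E = 1 := by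
  rw [probEvent_congr (F := fun _ => True) (by simpa using h), probEvent]
  simpa using sum_pow_mul_eq_add_pow p (1 - p) V

theorem probEvent_not : probEvent V p (fun A => ¬E A) = 1 - probEvent V p E := by
  rw [eq_sub_iff_add_eq, ← probEvent_of_forall (V := V) (p := p) (E := fun _ => True)
    fun _ _ => trivial, probEvent, probEvent, probEvent, ← sum_add_distrib]
  exact sum_congr rfl fun A _ => by by_cases h : E A <;> simp [h]

theorem probEvent_nonempty : probEvent V p Finset.Nonempty = 1 - (1 - p) ^ #V := by
  rw [probEvent_congr fun A _ => nonempty_iff_ne_empty, probEvent_not, probEvent,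
    sum_eq_single_of_mem ∅ (empty_mem_powerset V) fun B _ hB => by simp [hB]]
  simp

theorem probEvent_const_and (c : Prop) :
    probEvent V p (fun A => c ∧ E A) = if c then probEvent V p E else 0 := by
  by_cases hc : c <;> simp [probEvent, hc]

theorem probEvent_const_or (c : Prop) :
    probEvent V p (fun A => c ∨ E A) = if c then 1 else probEvent V p E := by
  by_cases hc : c
  · simp only [hc, true_or, if_true]
    exact probEvent_of_forall fun _ _ => trivial
  · simp [hc]

theorem sum_weight_mul_ite (V : Finset ι) (p : ℝ) (E : Finset ι → Prop) [DecidablePred E] :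
    ∑ A ∈ V.powerset, p ^ #A * (1 - p) ^ (#V - #A) * (if E A then 1 else 0) =
      probEvent V p E :=
  sum_congr rfl fun A _ => by by_cases h : E A <;> simp [h]

theorem sum_powerset_union {M : Type*} [AddCommMonoid M] {s t : Finset ι} (hst : Disjoint s t)
    (f : Finset ι → M) :
    ∑ A ∈ (s ∪ t).powerset, f A =
      ∑ B ∈ s.powerset, ∑ C ∈ t.powerset, f (B ∪ C) := by
  rw [← sum_product']
  refine sum_nbij' (fun A => (A ∩ s, A ∩ t)) (fun P => P.1 ∪ P.2) ?_ ?_ ?_ ?_ ?_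
  · intro A _
    simp [inter_subset_right]
  · intro P hP
    simp only [mem_product, mem_powerset] at hP ⊢
    exact union_subset_union hP.1 hP.2
  · intro A hA
    rw [mem_powerset] at hA
    rw [← inter_union_distrib_left, inter_eq_left.2 hA]
  · rintro ⟨B, C⟩ hBC
    simp only [mem_product, mem_powerset] at hBC
    have hCs : C ∩ s = ∅ := disjoint_iff_inter_eq_empty.1 (hst.symm.mono_left hBC.2)
    have hBt : B ∩ t = ∅ := disjoint_iff_inter_eq_empty.1 (hst.mono_left hBC.1)
    simp [union_inter_distrib_right, inter_eq_left.2 hBC.1, inter_eq_left.2 hBC.2, hCs, hBt]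
  · intro A hA
    rw [mem_powerset] at hA
    rw [← inter_union_distrib_left, inter_eq_left.2 hA]

theorem probEvent_union {s t : Finset ι} (hst : Disjoint s t) (p : ℝ) (E : Finset ι → Prop) :
    probEvent (s ∪ t) p E =
      ∑ B ∈ s.powerset,
        p ^ #B * (1 - p) ^ (#s - #B) * probEvent t p (fun C => E (B ∪ C)) := by
  rw [probEvent, sum_powerset_union hst]
  refine sum_congr rfl fun B hB => ?_
  rw [probEvent, mul_sum]
  refine sum_congr rfl fun C hC => ?_
  have hBs := card_le_card (mem_powerset.1 hB)
  have hCt := card_le_card (mem_powerset.1 hC)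
  have hcard : #(B ∪ C) = #B + #C :=
    card_union_of_disjoint ((hst.mono_left (mem_powerset.1 hB)).mono_right (mem_powerset.1 hC))
  have hexp : #(s ∪ t) - #(B ∪ C) = (#s - #B) + (#t - #C) := by
    rw [card_union_of_disjoint hst, hcard]; omega
  split_ifs
  · rw [hexp, hcard]; ring
  · ring

end ProbEvent

noncomputable def column (j : ℤ) (n : ℕ) : Finset (ℤ × ℤ) := {j} ×ˢ Icc 1 (n : ℤ)

def ColumnOccupied (n : ℕ) (j : ℤ) (A : Finset (ℤ × ℤ)) : Prop :=
  ∃ v ∈ A, v.1 = j ∧ 1 ≤ v.2 ∧ v.2 ≤ (n : ℤ)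

section Geometry

variable {m n : ℕ} {j : ℤ} {A B C : Finset (ℤ × ℤ)}

theorem card_column (j : ℤ) (n : ℕ) : #(column j n) = n := by
  simp [column]

theorem rectFin_succ (m n : ℕ) : rectFin (m + 1) n = rectFin m n ∪ column (m + 1) n := by
  ext ⟨x, y⟩
  simp only [rectFin, column, mem_union, mem_product, mem_Icc, mem_singleton]
  omega

theorem mem_column {v : ℤ × ℤ} :
    v ∈ column j n ↔ v.1 = j ∧ 1 ≤ v.2 ∧ v.2 ≤ (n : ℤ) := by
  simp only [column, mem_product, mem_singleton, mem_Icc]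

theorem fst_le_of_mem_rectFin {v : ℤ × ℤ} (hv : v ∈ rectFin m n) : v.1 ≤ m :=
  (mem_Icc.1 (mem_product.1 hv).1).2

theorem disjoint_rectFin_column (m n : ℕ) : Disjoint (rectFin m n) (column (m + 1) n) :=
  disjoint_left.2 fun _ hB hC => by
    have := fst_le_of_mem_rectFin hB
    have := (mem_column.1 hC).1
    omega

theorem columnOccupied_union :
    ColumnOccupied n j (B ∪ C) ↔ ColumnOccupied n j B ∨ ColumnOccupied n j C := by
  simp only [ColumnOccupied, mem_union, or_and_right, exists_or]

theorem not_columnOccupied (hA : ∀ v ∈ A, v.1 ≠ j) : ¬ColumnOccupied n j A :=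
  fun ⟨v, hv, hj, _⟩ => hA v hv hj

theorem columnOccupied_iff_nonempty (hA : A ⊆ column j n) :
    ColumnOccupied n j A ↔ A.Nonempty :=
  ⟨fun ⟨v, hv, _⟩ => ⟨v, hv⟩, fun ⟨v, hv⟩ => ⟨v, hv, mem_column.1 (hA hv)⟩⟩

theorem noVerticalDoubleGap_iff : NoVerticalDoubleGap m n A ↔
    ∀ j : ℤ, 1 ≤ j → j ≤ (m : ℤ) - 1 →
      ColumnOccupied n j A ∨ ColumnOccupied n (j + 1) A := by
  simp only [NoVerticalDoubleGap, ColumnOccupied, or_and_right, and_or_left, exists_or]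

theorem noVerticalDoubleGap_of_le_one (hm : m ≤ 1) : NoVerticalDoubleGap m n A :=
  fun _ h1 h2 => absurd h2 (by omega)

theorem noVerticalDoubleGap_succ_iff (hm : 1 ≤ m) : NoVerticalDoubleGap (m + 1) n A ↔
    NoVerticalDoubleGap m n A ∧ (ColumnOccupied n m A ∨ ColumnOccupied n (m + 1) A) := by
  simp only [noVerticalDoubleGap_iff]
  refine ⟨fun h => ⟨fun j h1 h2 => h j h1 (by omega), h m (by omega) (by omega)⟩,
    fun ⟨h, hlast⟩ j h1 h2 => ?_⟩
  rcases lt_or_eq_of_le (show j ≤ m by omega) with hj | rfl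
  · exact h j h1 (by omega)
  · exact hlast

theorem noVerticalDoubleGap_succ_and_iff : NoVerticalDoubleGap (m + 1) n A ∧
    ColumnOccupied n (m + 1) A ↔ NoVerticalDoubleGap m n A ∧ ColumnOccupied n (m + 1) A := by
  rcases Nat.eq_zero_or_pos m with rfl | hm
  · simp [noVerticalDoubleGap_of_le_one]
  · rw [noVerticalDoubleGap_succ_iff hm]
    tauto

theorem noVerticalDoubleGap_union_of_lt (hC : ∀ v ∈ C, (m : ℤ) < v.1) :
    NoVerticalDoubleGap m n (B ∪ C) ↔ NoVerticalDoubleGap m n B := by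
  have hC' : ∀ j ≤ (m : ℤ), ¬ColumnOccupied n j C :=
    fun j hj => not_columnOccupied fun v hv => by have := hC v hv; omega
  simp only [noVerticalDoubleGap_iff, columnOccupied_union]
  refine forall_congr' fun j => imp_congr_right fun _ => imp_congr_right fun hj => ?_
  simp [hC' j (by omega), hC' (j + 1) (by omega)]

theorem noVerticalDoubleGap_union_column_iff (hC : C ⊆ column (m + 1) n) :
    NoVerticalDoubleGap m n (B ∪ C) ↔ NoVerticalDoubleGap m n B :=
  noVerticalDoubleGap_union_of_lt fun v hv => by have := (mem_column.1 (hC hv)).1; omega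

theorem columnOccupied_union_column_iff (hC : C ⊆ column (m + 1) n) :
    ColumnOccupied n m (B ∪ C) ↔ ColumnOccupied n m B := by
  have : ¬ColumnOccupied n m C :=
    not_columnOccupied fun v hv => by have := (mem_column.1 (hC hv)).1; omega
  rw [columnOccupied_union, or_iff_left this]

theorem columnOccupied_succ_union_column_iff (hB : B ⊆ rectFin m n)
    (hC : C ⊆ column (m + 1) n) :
    ColumnOccupied n (m + 1) (B ∪ C) ↔ C.Nonempty := by
  have : ¬ColumnOccupied n (m + 1) B :=
    not_columnOccupied fun v hv => by have := fst_le_of_mem_rectFin (hB hv); omega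
  rw [columnOccupied_union, or_iff_right this, columnOccupied_iff_nonempty hC]

theorem noVerticalDoubleGap_succ_union_iff (hm : 1 ≤ m) (hB : B ⊆ rectFin m n)
    (hC : C ⊆ column (m + 1) n) :
    NoVerticalDoubleGap (m + 1) n (B ∪ C) ↔
      NoVerticalDoubleGap m n B ∧ (ColumnOccupied n m B ∨ C.Nonempty) := by
  rw [noVerticalDoubleGap_succ_iff hm, noVerticalDoubleGap_union_column_iff hC,
    columnOccupied_union_column_iff hC, columnOccupied_succ_union_column_iff hB hC]

theorem noVerticalDoubleGap_succ_and_union_iff (hB : B ⊆ rectFin m n)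
    (hC : C ⊆ column (m + 1) n) :
    NoVerticalDoubleGap (m + 1) n (B ∪ C) ∧ ColumnOccupied n (m + 1) (B ∪ C) ↔
      NoVerticalDoubleGap m n B ∧ C.Nonempty := by
  rw [noVerticalDoubleGap_succ_and_iff, noVerticalDoubleGap_union_column_iff hC,
    columnOccupied_succ_union_column_iff hB hC]

end Geometry

noncomputable def noDoubleGapProb (p : ℝ) (n m : ℕ) : ℝ :=
  probEvent (rectFin m n) p (NoVerticalDoubleGap m n)

section Recurrence

variable {p : ℝ} {m n : ℕ}

theorem noDoubleGapProb_of_le_one (hm : m ≤ 1) : noDoubleGapProb p n m = 1 :=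
  probEvent_of_forall fun _ _ => noVerticalDoubleGap_of_le_one hm

theorem noDoubleGapProb_succ (hm : 1 ≤ m) :
    noDoubleGapProb p n (m + 1) = (1 - (1 - p) ^ n) * noDoubleGapProb p n m +
      (1 - p) ^ n * probEvent (rectFin m n) p
        (fun A => NoVerticalDoubleGap m n A ∧ ColumnOccupied n m A) := by
  have inner : ∀ B ∈ (rectFin m n).powerset,
      probEvent (column (m + 1) n) p (fun C => NoVerticalDoubleGap (m + 1) n (B ∪ C)) =
        (1 - (1 - p) ^ n) * (if NoVerticalDoubleGap m n B then 1 else 0) +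
          (1 - p) ^ n * (if NoVerticalDoubleGap m n B ∧ ColumnOccupied n m B then 1 else 0) := by
    intro B hB
    rw [probEvent_congr fun C hC => noVerticalDoubleGap_succ_union_iff hm (mem_powerset.1 hB) hC,
      probEvent_const_and, probEvent_const_or, probEvent_nonempty, card_column]
    split_ifs <;> simp_all
  rw [noDoubleGapProb, rectFin_succ, probEvent_union (disjoint_rectFin_column m n),
    sum_congr rfl fun B hB => by rw [inner B hB]]
  simp only [mul_add, sum_add_distrib, mul_left_comm _ (1 - (1 - p) ^ n),
    mul_left_comm _ ((1 - p) ^ n), ← mul_sum, sum_weight_mul_ite, noDoubleGapProb]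

theorem probEvent_noVerticalDoubleGap_and_columnOccupied_succ :
    probEvent (rectFin (m + 1) n) p
        (fun A => NoVerticalDoubleGap (m + 1) n A ∧ ColumnOccupied n (m + 1) A) =
      (1 - (1 - p) ^ n) * noDoubleGapProb p n m := by
  have inner : ∀ B ∈ (rectFin m n).powerset,
      probEvent (column (m + 1) n) p (fun C =>
          NoVerticalDoubleGap (m + 1) n (B ∪ C) ∧ ColumnOccupied n (m + 1) (B ∪ C)) =
        (1 - (1 - p) ^ n) * (if NoVerticalDoubleGap m n B then 1 else 0) := by
    intro B hB
    rw [probEvent_congr fun C hC => noVerticalDoubleGap_succ_and_union_iff (mem_powerset.1 hB) hC,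
      probEvent_const_and, probEvent_nonempty, card_column]
    split_ifs <;> simp
  rw [rectFin_succ, probEvent_union (disjoint_rectFin_column m n),
    sum_congr rfl fun B hB => by rw [inner B hB]]
  simp only [mul_left_comm _ (1 - (1 - p) ^ n), ← mul_sum, sum_weight_mul_ite, noDoubleGapProb]

theorem noDoubleGapProb_add_two (m : ℕ) :
    noDoubleGapProb p n (m + 2) = (1 - (1 - p) ^ n) * noDoubleGapProb p n (m + 1) +
      (1 - p) ^ n * (1 - (1 - p) ^ n) * noDoubleGapProb p n m := by
  rw [noDoubleGapProb_succ (by omega), Nat.cast_succ,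
    probEvent_noVerticalDoubleGap_and_columnOccupied_succ]
  ring

end Recurrence

section Beta

variable {u : ℝ}

theorem betaFn_pos (hu : 0 < u) : 0 < betaFn u := by
  unfold betaFn
  positivity

theorem betaFn_le_one (hu : u ≤ 1) : betaFn u ≤ 1 := by
  have : √(u * (4 - 3 * u)) ≤ 2 - u :=
    Real.sqrt_le_iff.2 ⟨by linarith, by nlinarith [sq_nonneg (1 - u)]⟩
  unfold betaFn
  linarith

theorem betaFn_sq (hu0 : 0 ≤ u) (hu1 : u ≤ 4 / 3) :
    betaFn u ^ 2 = u * betaFn u + u * (1 - u) := by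
  have := Real.sq_sqrt (show 0 ≤ u * (4 - 3 * u) by nlinarith)
  unfold betaFn
  nlinarith

end Beta

theorem mul_le_pow_of_recurrence {x : ℕ → ℝ} {b c d : ℝ} (hc : 0 ≤ c) (hd : 0 ≤ d)
    (hb : b ^ 2 = c * b + d) (h0 : b * x 0 ≤ 1) (h1 : b * x 1 ≤ b)
    (hx : ∀ m, x (m + 2) = c * x (m + 1) + d * x m) (m : ℕ) : b * x m ≤ b ^ m := by
  induction m using Nat.twoStepInduction with
  | zero => simpa using h0
  | one => simpa using h1
  | more m ih₀ ih₁ =>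
    calc b * x (m + 2) = c * (b * x (m + 1)) + d * (b * x m) := by rw [hx]; ring
      _ ≤ c * b ^ (m + 1) + d * b ^ m := by gcongr
      _ = b ^ (m + 2) := by rw [pow_add b m 2, hb]; ring

theorem gFn_mul_neg_log {p : ℝ} (hp : p < 1) (n : ℕ) :
    gFn (n * -Real.log (1 - p)) = -Real.log (betaFn (1 - (1 - p) ^ n)) := by
  rw [gFn, mul_neg, neg_neg, ← Real.log_pow, Real.exp_log (pow_pos (by linarith) n)]

theorem prob_no_double_gap_le_general (m n : ℕ) (hn : 1 ≤ n)
    (p : ℝ) (hp0 : 0 < p) (hp1 : p < 1) :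
    probEvent (rectFin m n) p (NoVerticalDoubleGap m n) ≤
      Real.exp (-((m : ℝ) - 1) * gFn ((n : ℝ) * (-Real.log (1 - p)))) := by
  set u := 1 - (1 - p) ^ n
  have hu0 : 0 < u := sub_pos.2 (pow_lt_one₀ (by linarith) (by linarith) (by omega))
  have hu1 : u ≤ 1 := sub_le_self 1 (pow_nonneg (by linarith) n)
  have hb := betaFn_pos hu0
  have key : betaFn u * noDoubleGapProb p n m ≤ betaFn u ^ m :=
    mul_le_pow_of_recurrence (d := (1 - p) ^ n * u) hu0.le (by positivity)
      (by rw [betaFn_sq hu0.le (by linarith)]; ring)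
      (by rw [noDoubleGapProb_of_le_one (by omega), mul_one]; exact betaFn_le_one hu1)
      (by rw [noDoubleGapProb_of_le_one le_rfl, mul_one])
      noDoubleGapProb_add_two m
  rw [gFn_mul_neg_log hp1, show -((m : ℝ) - 1) * -Real.log (betaFn u) =
      Real.log (betaFn u) * ((m : ℝ) - 1) by ring, ← Real.rpow_def_of_pos hb,
    Real.rpow_sub_one hb.ne', Real.rpow_natCast, le_div_iff₀ hb, mul_comm]
  exact key

/-- Lemma 8 of Holroyd: the probability of no vertical double gap is at most
`exp(−(m−1)·g(nq))`. -/
theorem prob_no_double_gap_le (m n : ℕ) (hm : 1 ≤ m) (hn : 1 ≤ n)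
    (p : ℝ) (hp0 : 0 < p) (hp1 : p < 1) :
    probEvent (rectFin m n) p (NoVerticalDoubleGap m n) ≤
      Real.exp (-((m : ℝ) - 1) * gFn ((n : ℝ) * (-Real.log (1 - p)))) :=
  prob_no_double_gap_le_general m n hn p hp0 hp1
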